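/- arXiv:0807.2615 — 3 statements merged into one kernel-verified Lean document; each statement's English description precedes it below -/
import Mathlib

section
/- For any 2×2 density matrix ρ ≠ I/2, there exist rank-one projections X = |a⟩⟨a| and Y = |d⟩⟨d| such that Tr(ρ(XY + YX)) < 0. -/
open scoped ComplexOrder
open Matrix

/-!
Write `X = |a⟩⟨a|` and `Y = |d⟩⟨d|`. For Hermitian `ρ`, `Tr(ρ(XY + YX)) = 2 Re(⟨a|d⟩⟨d|ρ|a⟩)`.
As `ρ` has trace one and `ρ ≠ I/2`, it is not a multiple of the identity, so some unit vector `a`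
is not an eigenvector of `ρ`: `u = ρa - ⟨a|ρ|a⟩a` is a nonzero vector orthogonal to `a` with
`⟨u|ρ|a⟩ = ‖u‖²`. For `d = a + t u` we get `⟨a|d⟩⟨d|ρ|a⟩ = ⟨a|ρ|a⟩ + t‖u‖²`, whose real part is
negative for a suitable real `t`; normalising `d` only rescales it by a positive factor.
-/

namespace Matrix

variable {n : Type*} [Fintype n]

theorem trace_mul_vecMulVec_mul_vecMulVec {R : Type*} [CommSemiring R] (ρ : Matrix n n R)
    (a b c d : n → R) :
    (ρ * (vecMulVec a b * vecMulVec c d)).trace = (b ⬝ᵥ c) * (d ⬝ᵥ ρ *ᵥ a) := by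
  rw [vecMulVec_mul_vecMulVec, mul_vecMulVec, trace_vecMulVec, dotProduct_smul, smul_eq_mul,
    dotProduct_comm (ρ *ᵥ a)]

theorem IsHermitian.re_trace_mul_anticommutator {ρ : Matrix n n ℂ} (hρ : ρ.IsHermitian)
    (a d : n → ℂ) :
    (ρ * (vecMulVec a (star a) * vecMulVec d (star d)
        + vecMulVec d (star d) * vecMulVec a (star a))).trace.re
      = 2 * ((star a ⬝ᵥ d) * (star d ⬝ᵥ ρ *ᵥ a)).re := by
  have hswap : (star d ⬝ᵥ a) * (star a ⬝ᵥ ρ *ᵥ d)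
      = star ((star a ⬝ᵥ d) * (star d ⬝ᵥ ρ *ᵥ a)) := by
    rw [star_mul', star_dotProduct d a, star_dotProduct a (ρ *ᵥ d), star_mulVec, hρ.eq,
      ← dotProduct_mulVec]
  rw [mul_add, trace_add, trace_mul_vecMulVec_mul_vecMulVec, trace_mul_vecMulVec_mul_vecMulVec,
    hswap, Complex.add_re, Complex.star_def, Complex.conj_re]
  ring

theorem exists_ofReal_smul_dotProduct_self_eq_one {v : n → ℂ} (hv : v ≠ 0) :
    ∃ r : ℝ, 0 < r ∧ star ((r : ℂ) • v) ⬝ᵥ ((r : ℂ) • v) = 1 := by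
  obtain ⟨hpos, him⟩ := Complex.pos_iff.mp (dotProduct_star_self_pos_iff.mpr hv)
  set s := (star v ⬝ᵥ v).re
  have hreal : star v ⬝ᵥ v = (s : ℂ) := Complex.ext rfl (by simp [← him])
  refine ⟨(Real.sqrt s)⁻¹, by positivity, ?_⟩
  rw [star_smul, smul_dotProduct, dotProduct_smul, hreal, Complex.star_def, Complex.conj_ofReal,
    smul_eq_mul, smul_eq_mul]
  norm_cast
  rw [← mul_assoc, ← sq, inv_pow, Real.sq_sqrt hpos.le, inv_mul_cancel₀ hpos.ne']

theorem exists_dotProduct_self_eq_one_of_re_dotProduct_mul_neg (ρ : Matrix n n ℂ) (a : n → ℂ)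
    {d : n → ℂ} (hd : ((star a ⬝ᵥ d) * (star d ⬝ᵥ ρ *ᵥ a)).re < 0) :
    ∃ d', star d' ⬝ᵥ d' = 1 ∧ ((star a ⬝ᵥ d') * (star d' ⬝ᵥ ρ *ᵥ a)).re < 0 := by
  have hd0 : d ≠ 0 := by
    rintro rfl
    simp at hd
  obtain ⟨r, hr, hunit⟩ := exists_ofReal_smul_dotProduct_self_eq_one hd0
  refine ⟨(r : ℂ) • d, hunit, ?_⟩
  have hscale : (star a ⬝ᵥ (r : ℂ) • d) * (star ((r : ℂ) • d) ⬝ᵥ ρ *ᵥ a)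
      = ((r ^ 2 : ℝ) : ℂ) * ((star a ⬝ᵥ d) * (star d ⬝ᵥ ρ *ᵥ a)) := by
    rw [dotProduct_smul, star_smul, smul_dotProduct, Complex.star_def, Complex.conj_ofReal,
      smul_eq_mul, smul_eq_mul]
    push_cast
    ring
  rw [hscale, Complex.re_ofReal_mul]
  exact mul_neg_of_pos_of_neg (by positivity) hd

theorem exists_re_dotProduct_mul_neg (ρ : Matrix n n ℂ) {a : n → ℂ} (ha : star a ⬝ᵥ a = 1)
    (hu : ρ *ᵥ a - (star a ⬝ᵥ ρ *ᵥ a) • a ≠ 0) :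
    ∃ d, ((star a ⬝ᵥ d) * (star d ⬝ᵥ ρ *ᵥ a)).re < 0 := by
  set p := star a ⬝ᵥ ρ *ᵥ a
  set u := ρ *ᵥ a - p • a
  have hau : star a ⬝ᵥ u = 0 := by
    rw [dotProduct_sub, dotProduct_smul, ha, smul_eq_mul, mul_one, sub_self]
  have hua : star u ⬝ᵥ ρ *ᵥ a = star u ⬝ᵥ u := by
    rw [dotProduct_sub (star u), dotProduct_smul, star_dotProduct u a, hau, star_zero, smul_zero,
      sub_zero]
  obtain ⟨hq, -⟩ := Complex.pos_iff.mp (dotProduct_star_self_pos_iff.mpr hu)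
  set t : ℝ := -(p.re + 1) / (star u ⬝ᵥ u).re
  refine ⟨a + (t : ℂ) • u, ?_⟩
  have hleft : star a ⬝ᵥ (a + (t : ℂ) • u) = 1 := by
    rw [dotProduct_add, dotProduct_smul, ha, hau, smul_zero, add_zero]
  have hright : (star (a + (t : ℂ) • u) ⬝ᵥ ρ *ᵥ a).re = -1 := by
    rw [star_add, star_smul, add_dotProduct, smul_dotProduct, hua, Complex.star_def,
      Complex.conj_ofReal, smul_eq_mul, Complex.add_re, Complex.re_ofReal_mul,
      div_mul_cancel₀ _ hq.ne']
    ring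
  rw [hleft, one_mul, hright]
  norm_num

theorem exists_unit_not_eigenvector_of_forall_ne_smul_one [DecidableEq n] {ρ : Matrix n n ℂ}
    (hρ : ∀ c : ℂ, ρ ≠ c • 1) :
    ∃ a, star a ⬝ᵥ a = 1 ∧ ρ *ᵥ a - (star a ⬝ᵥ ρ *ᵥ a) • a ≠ 0 := by
  obtain ⟨v, hv⟩ : ∃ v, LinearIndependent ℂ ![v, ρ *ᵥ v] := by
    by_contra! h
    obtain ⟨c, hc⟩ := LinearMap.exists_eq_smul_id_of_forall_notLinearIndependent
      (f := toLin' ρ) (by simpa using h)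
    refine hρ c (toLin'.injective ?_)
    rw [hc, map_smul, toLin'_one]
    rfl
  obtain ⟨r, hr, hunit⟩ := exists_ofReal_smul_dotProduct_self_eq_one (hv.ne_zero 0)
  refine ⟨(r : ℂ) • v, hunit, fun hu => ?_⟩
  set p := star ((r : ℂ) • v) ⬝ᵥ ρ *ᵥ ((r : ℂ) • v)
  have hcomb : (-(p * r)) • v + (r : ℂ) • ρ *ᵥ v = 0 := by
    rw [← hu, mulVec_smul]
    module
  exact hr.ne' (by exact_mod_cast (LinearIndependent.pair_iff.mp hv _ _ hcomb).2)

theorem IsHermitian.exists_re_trace_mul_anticommutator_neg [DecidableEq n] {ρ : Matrix n n ℂ}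
    (hρ : ρ.IsHermitian) (hscalar : ∀ c : ℂ, ρ ≠ c • 1) :
    ∃ a d : n → ℂ, star a ⬝ᵥ a = 1 ∧ star d ⬝ᵥ d = 1 ∧
      (ρ * (vecMulVec a (star a) * vecMulVec d (star d)
        + vecMulVec d (star d) * vecMulVec a (star a))).trace.re < 0 := by
  obtain ⟨a, ha, hu⟩ := exists_unit_not_eigenvector_of_forall_ne_smul_one hscalar
  obtain ⟨d₀, hd₀⟩ := exists_re_dotProduct_mul_neg ρ ha hu
  obtain ⟨d, hd, hneg⟩ := exists_dotProduct_self_eq_one_of_re_dotProduct_mul_neg ρ a hd₀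
  refine ⟨a, d, ha, hd, ?_⟩
  rw [hρ.re_trace_mul_anticommutator]
  linarith

end Matrix

theorem qubit_state_detected_by_projections
    (ρ : Matrix (Fin 2) (Fin 2) ℂ) (hρ : ρ.PosSemidef) (htr : ρ.trace = 1)
    (hne : ρ ≠ (2 : ℂ)⁻¹ • 1) :
    ∃ a d : Fin 2 → ℂ, star a ⬝ᵥ a = 1 ∧ star d ⬝ᵥ d = 1 ∧
      (ρ * (Matrix.vecMulVec a (star a) * Matrix.vecMulVec d (star d)
        + Matrix.vecMulVec d (star d) * Matrix.vecMulVec a (star a))).trace.re < 0 := by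
  refine hρ.isHermitian.exists_re_trace_mul_anticommutator_neg fun c hc => hne ?_
  have hc2 : c * 2 = 1 := by simpa [hc] using htr
  rw [hc, eq_inv_of_mul_eq_one_left hc2]
end

section
/- Let B be an n×n Hermitian matrix with Tr(B) fixed, and suppose 0 ≤ A ≤ B. Then the minimal eigenvalue of B² − A², over all 2×2 Hermitian A, B with 0 ≤ A ≤ B and Tr(B) = 2, is bounded below by −4/27, and this bound is attained. -/
/-!
Write `C = B - A`, `τ = Tr A`, `σ = Tr C`. For `2 × 2` matrices Cayley–Hamilton gives
`B² - A² = (Tr B) C + σ A + (det A - det B) I`, so with `δ = det A - det B + t` and `Tr B = 2`,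
`det (B² - A² + t I) = σ² det A + 2τ det C + (δ + στ/2)² + σ (8t - στ²) / 4`.
AM–GM applied to `σ, τ/2, τ/2` gives `στ² ≤ 32/27`, so the determinant is nonnegative for
`t = 4/27`. The trace `Tr (B² - A²) = 2 Tr (AC) + Tr (C²)` is nonnegative too, and a Hermitian
`2 × 2` matrix with nonnegative trace and determinant is positive semidefinite.
-/

open scoped ComplexOrder
open Matrix

theorem Matrix.det_fin_two_mul_self_sub_mul_self_add_smul_one {R : Type*} [CommRing R]
    (A B : Matrix (Fin 2) (Fin 2) R) (t : R) :
    (B * B - A * A + t • 1).det =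
      (B - A).trace ^ 2 * A.det + B.trace * A.trace * (B - A).det + B.trace * (B - A).trace * t
        + (B - A).trace * A.trace * (A.det - B.det + t) + (A.det - B.det + t) ^ 2 := by
  simp [det_fin_two, trace_fin_two, mul_apply, Fin.sum_univ_two]
  ring

theorem mul_sq_le_of_add_eq_two {σ τ : ℝ} (hσ : 0 ≤ σ) (hτ : 0 ≤ τ) (h : σ + τ = 2) :
    σ * τ ^ 2 ≤ 32 / 27 := by
  obtain rfl : σ = 2 - τ := by linarith
  nlinarith [mul_nonneg (sq_nonneg (3 * τ - 4)) (by linarith : 0 ≤ 3 * τ + 2)]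

theorem det_polynomial_nonneg_of_add_eq_two {σ τ α γ δ : ℝ} (hσ : 0 ≤ σ) (hτ : 0 ≤ τ)
    (hα : 0 ≤ α) (hγ : 0 ≤ γ) (h : σ + τ = 2) :
    0 ≤ σ ^ 2 * α + 2 * τ * γ + 2 * σ * (4 / 27) + σ * τ * δ + δ ^ 2 := by
  have := mul_nonneg hσ (sub_nonneg.2 (mul_sq_le_of_add_eq_two hσ hτ h))
  nlinarith [sq_nonneg (δ + σ * τ / 2), mul_nonneg (sq_nonneg σ) hα, mul_nonneg hτ hγ]

section RCLike

variable {𝕜 : Type*} [RCLike 𝕜]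

theorem Matrix.PosSemidef.trace_mul_nonneg {n : Type*} [Fintype n] {A C : Matrix n n 𝕜}
    (hA : A.PosSemidef) (hC : C.PosSemidef) : 0 ≤ (A * C).trace := by
  classical
  open scoped MatrixOrder in
  obtain ⟨X, rfl⟩ := CStarAlgebra.nonneg_iff_eq_star_mul_self.mp hA.nonneg
  rw [mul_assoc, trace_mul_comm, star_eq_conjTranspose]
  exact (hC.mul_mul_conjTranspose_same X).trace_nonneg

theorem Matrix.PosSemidef.trace_mul_self_sub_mul_self_nonneg {n : Type*} [Fintype n]
    {A B : Matrix n n 𝕜} (hA : A.PosSemidef) (hBA : (B - A).PosSemidef) :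
    0 ≤ (B * B - A * A).trace := by
  have h : B * B - A * A = A * (B - A) + (B - A) * A + (B - A) * (B - A) := by noncomm_ring
  rw [h, trace_add, trace_add, trace_mul_comm (B - A) A]
  have hAC := hA.trace_mul_nonneg hBA
  exact add_nonneg (add_nonneg hAC hAC) (hBA.trace_mul_nonneg hBA)

theorem Matrix.IsHermitian.posSemidef_of_trace_nonneg_of_det_nonneg
    {M : Matrix (Fin 2) (Fin 2) 𝕜} (hM : M.IsHermitian) (htr : 0 ≤ M.trace)
    (hdet : 0 ≤ M.det) : M.PosSemidef := by
  rw [hM.trace_eq_sum_eigenvalues, Fin.sum_univ_two, ← RCLike.ofReal_add,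
    RCLike.ofReal_nonneg] at htr
  rw [hM.det_eq_prod_eigenvalues, Fin.prod_univ_two, ← RCLike.ofReal_mul,
    RCLike.ofReal_nonneg] at hdet
  rw [hM.posSemidef_iff_eigenvalues_nonneg]
  simp only [Pi.le_def, Pi.zero_apply, Fin.forall_fin_two]
  constructor <;> nlinarith

variable {A B : Matrix (Fin 2) (Fin 2) 𝕜}

theorem Matrix.PosSemidef.det_mul_self_sub_mul_self_add_smul_one_nonneg
    (hA : A.PosSemidef) (hBA : (B - A).PosSemidef) (htr : B.trace = 2) :
    0 ≤ (B * B - A * A + (4 / 27 : 𝕜) • 1).det := by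
  have hB : B.PosSemidef := by simpa using hA.add hBA
  obtain ⟨σ, hσ, hσC⟩ := RCLike.nonneg_iff_exists_ofReal.mp hBA.trace_nonneg
  obtain ⟨τ, hτ, hτA⟩ := RCLike.nonneg_iff_exists_ofReal.mp hA.trace_nonneg
  obtain ⟨α, hα, hαA⟩ := RCLike.nonneg_iff_exists_ofReal.mp hA.det_nonneg
  obtain ⟨γ, hγ, hγC⟩ := RCLike.nonneg_iff_exists_ofReal.mp hBA.det_nonneg
  obtain ⟨β, -, hβB⟩ := RCLike.nonneg_iff_exists_ofReal.mp hB.det_nonneg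
  have hστ : σ + τ = 2 := by
    have : (B - A).trace + A.trace = B.trace := by rw [trace_sub, sub_add_cancel]
    exact_mod_cast (hσC ▸ hτA ▸ this).trans htr
  rw [det_fin_two_mul_self_sub_mul_self_add_smul_one, htr, ← hσC, ← hτA, ← hαA, ← hγC,
    ← hβB]
  have := (RCLike.ofReal_nonneg (K := 𝕜)).mpr
    (det_polynomial_nonneg_of_add_eq_two (δ := α - β + 4 / 27) hσ hτ hα hγ hστ)
  push_cast at this
  exact this

theorem Matrix.PosSemidef.mul_self_sub_mul_self_add_smul_one
    (hA : A.PosSemidef) (hBA : (B - A).PosSemidef) (htr : B.trace = 2) :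
    (B * B - A * A + (4 / 27 : 𝕜) • 1).PosSemidef := by
  have hB : B.IsHermitian := by simpa using (hA.add hBA).isHermitian
  have hM : (B * B - A * A + (4 / 27 : 𝕜) • 1).IsHermitian := by
    simp only [← sq]
    exact ((hB.pow 2).sub (hA.isHermitian.pow 2)).add
      (isHermitian_one.smul (by simp [IsSelfAdjoint]))
  refine hM.posSemidef_of_trace_nonneg_of_det_nonneg ?_
    (hA.det_mul_self_sub_mul_self_add_smul_one_nonneg hBA htr)
  rw [trace_add, trace_smul, trace_one]
  exact add_nonneg (hA.trace_mul_self_sub_mul_self_nonneg hBA) (by simp; positivity)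

end RCLike

open Complex in
/-- Equality in the determinant bound forces `det A = det (B - A) = 0` and `Tr A = 4/3`: here
`A` and `B - A` have rank one, with ranges spanned by `(1, 0)` and `(1, 1 - i)`. -/
theorem exists_mul_self_sub_mul_self_hasEigenvector_neg_four_div_twentyseven :
    ∃ A B : Matrix (Fin 2) (Fin 2) ℂ, A.IsHermitian ∧ B.IsHermitian ∧
      A.PosSemidef ∧ (B - A).PosSemidef ∧ B.trace = 2 ∧
      ∃ v : Fin 2 → ℂ, v ≠ 0 ∧ (B * B - A * A) *ᵥ v = (-(4 / 27) : ℂ) • v := by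
  set A : Matrix (Fin 2) (Fin 2) ℂ := !![4 / 3, 0; 0, 0]
  set B : Matrix (Fin 2) (Fin 2) ℂ := !![14 / 9, 2 * (1 + I) / 9; 2 * (1 - I) / 9, 4 / 9]
  have hA : A.PosSemidef := by
    refine IsHermitian.posSemidef_of_trace_nonneg_of_det_nonneg ?_ ?_ ?_
    · ext i j; fin_cases i <;> fin_cases j <;> simp [A]
    · norm_num [A, trace_fin_two, Complex.nonneg_iff]
    · simp [A, det_fin_two]
  have hBA : (B - A).PosSemidef := by
    refine IsHermitian.posSemidef_of_trace_nonneg_of_det_nonneg ?_ ?_ ?_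
    · ext i j; fin_cases i <;> fin_cases j <;> simp [A, B, Complex.ext_iff]
    · norm_num [A, B, trace_fin_two, Complex.nonneg_iff]
    · have hdet : (B - A).det = 0 := by
        simp [A, B, det_fin_two]; ring_nf; simp [I_sq]
      exact hdet.ge
  refine ⟨A, B, hA.isHermitian, by simpa using (hA.add hBA).isHermitian, hA, hBA, ?_,
    ![1, I - 1], by simp, ?_⟩
  · norm_num [B, trace_fin_two]
  · ext i; fin_cases i <;> simp [A, B, mulVec, dotProduct, Fin.sum_univ_two, Complex.ext_iff] <;>
      norm_num

theorem qubit_witness_min_eigenvalue_bound :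
    (∀ A B : Matrix (Fin 2) (Fin 2) ℂ, A.IsHermitian → B.IsHermitian →
      A.PosSemidef → (B - A).PosSemidef → B.trace = 2 →
      (B * B - A * A + (4 / 27 : ℂ) • 1).PosSemidef) ∧
    (∃ A B : Matrix (Fin 2) (Fin 2) ℂ, A.IsHermitian ∧ B.IsHermitian ∧
      A.PosSemidef ∧ (B - A).PosSemidef ∧ B.trace = 2 ∧
      ∃ v : Fin 2 → ℂ, v ≠ 0 ∧
        (B * B - A * A) *ᵥ v = (-(4 / 27) : ℂ) • v) :=
  ⟨fun _ _ _ _ hA hBA htr => hA.mul_self_sub_mul_self_add_smul_one hBA htr,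
    exists_mul_self_sub_mul_self_hasEigenvector_neg_four_div_twentyseven⟩
end

section
/- Under the hypotheses of the collective-observable decomposition, if the minimal eigenvalue of b² − a² is −μ with μ > 0, then the minimal eigenvalue of B² − A² = ((1/N)Σaᵢ)² vs ((1/N)Σbᵢ)² difference satisfies λ_min(B² − A²) ≥ −μ/N. -/
/-!
Write `xᵢ` for `x` acting on the `i`-th tensor factor. Expanding the squares,
`N² (B² - A²) = ∑ᵢ (bᵢ² - aᵢ²) + ∑_{i ≠ j} (bᵢ bⱼ - aᵢ aⱼ)`.
Embedding into one factor preserves positivity, so each diagonal term is `≥ -μ`.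
Each off-diagonal term equals `bᵢ (b - a)ⱼ + (b - a)ᵢ aⱼ`, a sum of products of commuting
positive operators on different factors, hence is positive. Thus `N² (B² - A²) ≥ -N μ`.
-/

open scoped ComplexOrder
open Matrix Finset

/-- The single-particle operator `m` acting on the `i`-th factor of the `N`-fold
tensor product `(ℂ^d)^{⊗N}`, realized as a matrix indexed by `Fin N → Fin d`. -/
def embed {d N : ℕ} (m : Matrix (Fin d) (Fin d) ℂ) (i : Fin N) :
    Matrix (Fin N → Fin d) (Fin N → Fin d) ℂ :=
  Matrix.of fun x y =>
    m (x i) (y i) * ∏ j ∈ Finset.univ.erase i, (if x j = y j then (1 : ℂ) else 0)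

open scoped MatrixOrder Kronecker

theorem sum_mul_sum_sub_sum_mul_sum_add_card_smul_nonneg {R ι : Type*} [Ring R] [PartialOrder R]
    [IsOrderedAddMonoid R] [DecidableEq ι] (s : Finset ι) (x y : ι → R) (c : R)
    (hdiag : ∀ i ∈ s, 0 ≤ y i * y i - x i * x i + c)
    (hoff : ∀ i ∈ s, ∀ j ∈ s, i ≠ j → x i * x j ≤ y i * y j) :
    0 ≤ (∑ i ∈ s, y i) * (∑ i ∈ s, y i) - (∑ i ∈ s, x i) * (∑ i ∈ s, x i) + #s • c := by
  rw [Finset.sum_mul_sum, Finset.sum_mul_sum, ← Finset.sum_sub_distrib, ← Finset.sum_const,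
    ← Finset.sum_add_distrib]
  refine Finset.sum_nonneg fun i hi => ?_
  rw [← Finset.sum_sub_distrib, ← Finset.add_sum_erase s _ hi, add_right_comm]
  exact add_nonneg (hdiag i hi) (Finset.sum_nonneg fun j hj =>
    sub_nonneg.mpr (hoff i hi j (Finset.mem_of_mem_erase hj) (Finset.ne_of_mem_erase hj).symm))

section

variable {d N : ℕ}

theorem embed_apply (m : Matrix (Fin d) (Fin d) ℂ) (i : Fin N) (x y : Fin N → Fin d) :
    embed m i x y = if ∀ j, j ≠ i → x j = y j then m (x i) (y i) else 0 := by
  simp only [embed, of_apply, Finset.prod_boole, mul_ite, mul_one, mul_zero, Finset.mem_erase,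
    Finset.mem_univ, and_true]

theorem embed_eq_submatrix_kronecker (m : Matrix (Fin d) (Fin d) ℂ) (i : Fin N) :
    embed m i = (m ⊗ₖ (1 : Matrix ({j // j ≠ i} → Fin d) ({j // j ≠ i} → Fin d) ℂ)).submatrix
      (Equiv.funSplitAt i (Fin d)) (Equiv.funSplitAt i (Fin d)) := by
  ext x y
  simp only [embed_apply, submatrix_apply, Equiv.funSplitAt_apply, kronecker_apply, one_apply,
    mul_ite, mul_one, mul_zero, funext_iff, Subtype.forall]

theorem embed_mul_embed_apply_of_ne (m m' : Matrix (Fin d) (Fin d) ℂ) {i j : Fin N}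
    (hij : i ≠ j) (x y : Fin N → Fin d) :
    (embed m i * embed m' j) x y =
      if ∀ k ∉ ({i, j} : Finset (Fin N)), x k = y k then m (x i) (y i) * m' (x j) (y j) else 0 := by
  rw [mul_apply, Finset.sum_eq_single (Function.update x i (y i))]
  · simp only [embed_apply, Function.update_self, Function.update_of_ne hij.symm]
    have hx : ∀ k, k ≠ i → x k = Function.update x i (y i) k := fun k hk =>
      (Function.update_of_ne hk _ _).symm
    have hy : (∀ k, k ≠ j → Function.update x i (y i) k = y k) ↔
        ∀ k ∉ ({i, j} : Finset (Fin N)), x k = y k := by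
      simp only [Finset.mem_insert, Finset.mem_singleton, not_or]
      refine ⟨fun h k hk => ?_, fun h k hkj => ?_⟩
      · rw [← h k hk.2, Function.update_of_ne hk.1]
      · rcases eq_or_ne k i with rfl | hki
        · exact Function.update_self ..
        · rw [Function.update_of_ne hki]
          exact h k ⟨hki, hkj⟩
    rw [if_pos hx]
    simp only [hy, mul_ite, mul_zero]
  · intro z _ hz
    simp only [embed_apply]
    split_ifs with hx hy <;> try simp only [zero_mul, mul_zero]
    refine absurd (funext fun k => ?_) hz
    rcases eq_or_ne k i with rfl | hki
    · rw [Function.update_self, hy k hij]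
    · rw [Function.update_of_ne hki, hx k hki]
  · simp

theorem embed_commute (m m' : Matrix (Fin d) (Fin d) ℂ) {i j : Fin N} (hij : i ≠ j) :
    Commute (embed m i) (embed m' j) := by
  ext x y
  rw [embed_mul_embed_apply_of_ne m m' hij, embed_mul_embed_apply_of_ne m' m hij.symm,
    Finset.pair_comm, mul_comm]

theorem embed_mul_embed_self (m m' : Matrix (Fin d) (Fin d) ℂ) (i : Fin N) :
    embed m i * embed m' i = embed (m * m') i := by
  rw [embed_eq_submatrix_kronecker, embed_eq_submatrix_kronecker, embed_eq_submatrix_kronecker,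
    submatrix_mul_equiv, ← mul_kronecker_mul, one_mul]

theorem embed_one (i : Fin N) : embed (1 : Matrix (Fin d) (Fin d) ℂ) i = 1 := by
  rw [embed_eq_submatrix_kronecker, one_kronecker_one, submatrix_one_equiv]

theorem embed_add (m m' : Matrix (Fin d) (Fin d) ℂ) (i : Fin N) :
    embed (m + m') i = embed m i + embed m' i := by
  ext x y
  simp [embed, add_mul]

theorem embed_sub (m m' : Matrix (Fin d) (Fin d) ℂ) (i : Fin N) :
    embed (m - m') i = embed m i - embed m' i := by
  ext x y
  simp [embed, sub_mul]

theorem embed_smul (c : ℂ) (m : Matrix (Fin d) (Fin d) ℂ) (i : Fin N) :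
    embed (c • m) i = c • embed m i := by
  ext x y
  simp [embed, mul_assoc]

theorem embed_nonneg {m : Matrix (Fin d) (Fin d) ℂ} (hm : 0 ≤ m) (i : Fin N) :
    0 ≤ embed m i := by
  rw [nonneg_iff_posSemidef, embed_eq_submatrix_kronecker, posSemidef_submatrix_equiv]
  exact (nonneg_iff_posSemidef.mp hm).kronecker .one

theorem embed_mul_embed_le_embed_mul_embed {a b : Matrix (Fin d) (Fin d) ℂ}
    (ha : 0 ≤ a) (hab : a ≤ b) {i j : Fin N} (hij : i ≠ j) :
    embed a i * embed a j ≤ embed b i * embed b j := by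
  rw [← sub_nonneg]
  have hsplit : embed b i * embed b j - embed a i * embed a j =
      embed b i * embed (b - a) j + embed (b - a) i * embed a j := by
    rw [embed_sub, embed_sub]
    noncomm_ring
  have hba : 0 ≤ b - a := sub_nonneg.mpr hab
  rw [hsplit]
  exact add_nonneg ((embed_commute b (b - a) hij).mul_nonneg (embed_nonneg (ha.trans hab) i)
    (embed_nonneg hba j)) ((embed_commute (b - a) a hij).mul_nonneg (embed_nonneg hba i)
    (embed_nonneg ha j))

end

theorem collective_witness_eigenvalue_bound_general {d N : ℕ}
    (a b : Matrix (Fin d) (Fin d) ℂ)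
    (ha0 : a.PosSemidef) (hab : (b - a).PosSemidef)
    (μ : ℝ)
    (hlow : (b * b - a * a + (μ : ℂ) • 1).PosSemidef)
    (A B : Matrix (Fin N → Fin d) (Fin N → Fin d) ℂ)
    (hA : A = (N : ℂ)⁻¹ • ∑ i : Fin N, embed a i)
    (hB : B = (N : ℂ)⁻¹ • ∑ i : Fin N, embed b i) :
    (B * B - A * A + ((μ / N : ℝ) : ℂ) • 1).PosSemidef := by
  set Sa := ∑ i : Fin N, embed a i
  set Sb := ∑ i : Fin N, embed b i
  have hsum : 0 ≤ Sb * Sb - Sa * Sa + N • ((μ : ℂ) • 1) := by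
    simpa using sum_mul_sum_sub_sum_mul_sum_add_card_smul_nonneg Finset.univ
      (embed a) (embed b) ((μ : ℂ) • 1)
      (fun i _ => by
        simpa only [embed_add, embed_sub, embed_smul, embed_one, embed_mul_embed_self] using
          embed_nonneg (nonneg_iff_posSemidef.mpr hlow) i)
      (fun i _ j _ hij => embed_mul_embed_le_embed_mul_embed
        (nonneg_iff_posSemidef.mpr ha0) (le_iff.mpr hab) hij)
  have hscale : B * B - A * A + ((μ / N : ℝ) : ℂ) • 1 = ((N : ℂ)⁻¹ * (N : ℂ)⁻¹) •
      (Sb * Sb - Sa * Sa + N • ((μ : ℂ) • 1)) := by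
    rw [hA, hB, smul_add, smul_sub, smul_mul_smul_comm, smul_mul_smul_comm,
      ← Nat.cast_smul_eq_nsmul ℂ, smul_smul, smul_smul]
    congr 2
    -- for `N = 0` both scalars are junk zeros
    rcases eq_or_ne (N : ℂ) 0 with hN | hN
    · simp [hN]
    · push_cast
      field_simp
  rw [hscale]
  exact (nonneg_iff_posSemidef.mp hsum).smul (by positivity)

theorem collective_witness_eigenvalue_bound {d N : ℕ}
    (a b : Matrix (Fin d) (Fin d) ℂ) (ha : a.IsHermitian) (hb : b.IsHermitian)
    (ha0 : a.PosSemidef) (hab : (b - a).PosSemidef)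
    (μ : ℝ) (hμ : 0 < μ)
    (hlow : (b * b - a * a + (μ : ℂ) • 1).PosSemidef)
    (hmin : ∃ v : Fin d → ℂ, v ≠ 0 ∧ (b * b - a * a) *ᵥ v = (-(μ : ℂ)) • v)
    (A B : Matrix (Fin N → Fin d) (Fin N → Fin d) ℂ)
    (hA : A = (N : ℂ)⁻¹ • ∑ i : Fin N, embed a i)
    (hB : B = (N : ℂ)⁻¹ • ∑ i : Fin N, embed b i) :
    (B * B - A * A + ((μ / N : ℝ) : ℂ) • 1).PosSemidef :=
  collective_witness_eigenvalue_bound_general a b ha0 hab μ hlow A B hA hB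
end
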